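/- Let N = {1,…,2n} carry a coloring with exactly n black and n white nodes, and let T be the set of nodes that are either odd and white or even and black. Let π be an odd-even pairing and ρ a black-white pairing of N. Then the number of subsets S ⊆ N satisfying ρ(S) = S and π(S △ T) = S △ T equals 2^{(number of components of π ∪ ρ)} (here △ denotes symmetric difference); moreover every such S is balanced. -/

import Mathlib

/-!
Write `B` for the black nodes and `O` for the odd ones, so that `T = O ∆ B`. Since `ρ` swaps `B`
with its complement and `π` swaps `O` with its complement, `S` is `ρ`-invariant iff `ρ` swaps
`U = S ∆ B` with its complement, and `S ∆ T = U ∆ O` is `π`-invariant iff `π` swaps `U` with its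
complement. So the sets counted are, up to `∆ B`, the proper 2-colourings `U` of the graph
`π ∪ ρ`. That graph is a union of two perfect matchings, hence a disjoint union of even cycles,
so each component admits exactly two colourings and there are `2 ^ #components` in all.
Balance is immediate: `ρ` maps the black nodes of a `ρ`-invariant `S` bijectively onto its white
nodes.
-/

namespace DD

/-- The node set `{1, …, 2n}`. -/
def nodes (n : ℕ) : Finset ℕ := Finset.Icc 1 (2 * n)

/-- `ρ` is a pairing of `{1,…,2n}`: a fixed-point-free involution of the node set. -/
structure IsPairing (n : ℕ) (ρ : ℕ → ℕ) : Prop where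
  maps : ∀ i ∈ nodes n, ρ i ∈ nodes n
  invol : ∀ i ∈ nodes n, ρ (ρ i) = i
  nofix : ∀ i ∈ nodes n, ρ i ≠ i

/-- Number of crossings of `ρ` among pairs of `ρ` contained in `A`:
a crossing is a pair of pairs `(a,c)`, `(b,d)` of `ρ` with `a < b < c < d`. -/
def numCrossingsOn (A : Finset ℕ) (ρ : ℕ → ℕ) : ℕ :=
  ((A ×ˢ A).filter (fun p => p.1 < p.2 ∧ p.2 < ρ p.1 ∧ ρ p.1 < ρ p.2)).card

/-- Number of crossings of a pairing of `{1,…,2n}`. -/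
def numCrossings (n : ℕ) (ρ : ℕ → ℕ) : ℕ := numCrossingsOn (nodes n) ρ

/-- A pairing is planar if it has no crossings. -/
def IsPlanar (n : ℕ) (ρ : ℕ → ℕ) : Prop := numCrossings n ρ = 0

/-- A coloring `c : ℕ → Bool` of the nodes: `true` = black, `false` = white.
A black-white pairing pairs each black node with a white node. -/
def IsBW (n : ℕ) (c : ℕ → Bool) (ρ : ℕ → ℕ) : Prop :=
  ∀ i ∈ nodes n, c (ρ i) = !(c i)

/-- An odd-even pairing pairs each odd node with an even node. -/
def IsOE (n : ℕ) (ρ : ℕ → ℕ) : Prop :=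
  ∀ i ∈ nodes n, ρ i % 2 ≠ i % 2

/-- The coloring has exactly `n` black (hence exactly `n` white) nodes. -/
def BalancedColoring (n : ℕ) (c : ℕ → Bool) : Prop :=
  ((nodes n).filter (fun i => c i = true)).card = n

/-- The black nodes. -/
def blacks (n : ℕ) (c : ℕ → Bool) : Finset ℕ := (nodes n).filter (fun i => c i = true)

/-- The white nodes. -/
def whites (n : ℕ) (c : ℕ → Bool) : Finset ℕ := (nodes n).filter (fun i => c i = false)

/-- `sign_BW(ρ)`: the sign of the permutation sending `i` to the rank of `w_i = ρ(b_i)`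
among the white nodes, computed as `(-1)` to the number of inversions, i.e. the number of
pairs of black nodes `b < b'` with `ρ b > ρ b'`. -/
def signBW (n : ℕ) (c : ℕ → Bool) (ρ : ℕ → ℕ) : ℤ :=
  (-1 : ℤ) ^ (((nodes n ×ˢ nodes n).filter
    (fun p => c p.1 = true ∧ c p.2 = true ∧ p.1 < p.2 ∧ ρ p.2 < ρ p.1)).card)

/-- `sign_OE(π)`: the sign of the permutation sending `i` to `π(2i−1)/2`, computed as
`(-1)` to the number of pairs of odd nodes `a < b` with `π a > π b`. -/
def signOE (n : ℕ) (π : ℕ → ℕ) : ℤ :=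
  (-1 : ℤ) ^ (((nodes n ×ˢ nodes n).filter
    (fun p => p.1 % 2 = 1 ∧ p.2 % 2 = 1 ∧ p.1 < p.2 ∧ π p.2 < π p.1)).card)

/-- `a_{b,w}`: the number of indices `i` with `min b w ≤ i < max b w` such that nodes `i`
and `i+1` have the same color. -/
def aCount (c : ℕ → Bool) (b w : ℕ) : ℕ :=
  ((Finset.Ico (min b w) (max b w)).filter (fun i => c i = c (i + 1))).card

/-- `sign(b,w) = (−1)^{(|b−w| + a_{b,w} − 1)/2}` for a black node `b` and white node `w`. -/
def pairSign (c : ℕ → Bool) (b w : ℕ) : ℤ :=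
  (-1 : ℤ) ^ ((max b w - min b w + aCount c b w - 1) / 2)

/-- Cyclic successor of node `m` in `{1,…,2n}`. -/
def nextNode (n m : ℕ) : ℕ := if m = 2 * n then 1 else m + 1

/-- Couples of consecutive nodes of the same color, cyclically: indices `m ∈ {1,…,2n}`
with nodes `m` and `m+1` (cyclically) of the same color. -/
def couples (n : ℕ) (c : ℕ → Bool) : Finset ℕ :=
  (nodes n).filter (fun m => c m = c (nextNode n m))

/-- The value `φ(m)` for a couple `m`: writing `r` for the rank of `m` among couples of its
own color, `φ(m) = 2r` if `m` has the same color as node `1`, and `φ(m) = 2r − 1` otherwise. -/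
def phiCouple (n : ℕ) (c : ℕ → Bool) (m : ℕ) : ℕ :=
  if c m = c 1 then 2 * ((couples n c).filter (fun m' => c m' = c m ∧ m' ≤ m)).card
  else 2 * ((couples n c).filter (fun m' => c m' = c m ∧ m' ≤ m)).card - 1

/-- `sign_cons(N)`: the sign of the one-line permutation `(φ(n₁),…,φ(n_{2k}))`, computed
as `(-1)` to its number of inversions. -/
def signCons (n : ℕ) (c : ℕ → Bool) : ℤ :=
  (-1 : ℤ) ^ (((couples n c ×ˢ couples n c).filter
    (fun p => p.1 < p.2 ∧ phiCouple n c p.2 < phiCouple n c p.1)).card)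

/-- The set `T` of nodes that are odd and white, or even and black. -/
def Tset (n : ℕ) (c : ℕ → Bool) : Finset ℕ :=
  (nodes n).filter (fun i => (i % 2 = 1 ∧ c i = false) ∨ (i % 2 = 0 ∧ c i = true))

/-- A subset is balanced if it contains equally many black and white nodes. -/
def BalancedSubset (c : ℕ → Bool) (S : Finset ℕ) : Prop :=
  (S.filter (fun i => c i = true)).card = (S.filter (fun i => c i = false)).card

/-- `ρ` does not connect `S` to its complement: `ρ(S) = S`. -/
def Invariant (S : Finset ℕ) (ρ : ℕ → ℕ) : Prop := ∀ i ∈ S, ρ i ∈ S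

/-- Reachability under the subgroup generated by the involutions `π` and `ρ`. -/
def compRel (n : ℕ) (π ρ : ℕ → ℕ) (a b : ℕ) : Prop :=
  Relation.ReflTransGen (fun u v => u ∈ nodes n ∧ (v = π u ∨ v = ρ u)) a b

open scoped Classical in
/-- The number of components (orbits) of `π ∪ ρ` on the node set. -/
noncomputable def numComponents (n : ℕ) (π ρ : ℕ → ℕ) : ℕ :=
  ((nodes n).image (fun a => (nodes n).filter (fun b => compRel n π ρ a b))).card


section Words

variable {n : ℕ} {π ρ : ℕ → ℕ}

def step (π ρ : ℕ → ℕ) (s : Bool) : ℕ → ℕ := cond s π ρ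

def applyWord (π ρ : ℕ → ℕ) (w : List Bool) (a : ℕ) : ℕ := w.foldr (step π ρ) a

@[simp] lemma applyWord_nil (a : ℕ) : applyWord π ρ [] a = a := rfl

@[simp] lemma applyWord_cons (s : Bool) (w : List Bool) (a : ℕ) :
    applyWord π ρ (s :: w) a = step π ρ s (applyWord π ρ w a) := rfl

lemma applyWord_append (w₁ w₂ : List Bool) (a : ℕ) :
    applyWord π ρ (w₁ ++ w₂) a = applyWord π ρ w₁ (applyWord π ρ w₂ a) :=
  List.foldr_append

/-- Over a two-letter alphabet a word without two equal adjacent letters alternates, so if its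
length is odd its end letters agree. -/
lemma exists_adjacent_eq_or_ends_eq_of_odd_length :
    ∀ w : List Bool, Odd w.length →
      (∃ s, w = [s]) ∨ (∃ u s v, w = u ++ s :: s :: v) ∨ ∃ s m, w = s :: m ++ [s]
  | [], h => by simp at h
  | [s], _ => .inl ⟨s, rfl⟩
  | s :: t :: r, h => by
    by_cases hst : s = t
    · exact .inr (.inl ⟨[], s, r, by rw [hst]; rfl⟩)
    have hr : Odd r.length := by simpa [parity_simps] using h
    rcases exists_adjacent_eq_or_ends_eq_of_odd_length r hr with
      ⟨u, rfl⟩ | ⟨u, x, v, rfl⟩ | ⟨u, m, rfl⟩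
    · by_cases htu : t = u
      · exact .inr (.inl ⟨[s], t, [], by rw [htu]; rfl⟩)
      · have hus : u = s := by revert hst htu; cases s <;> cases t <;> cases u <;> simp
        exact .inr (.inr ⟨s, [t], by rw [hus]; rfl⟩)
    · exact .inr (.inl ⟨s :: t :: u, x, v, rfl⟩)
    · by_cases htu : t = u
      · exact .inr (.inl ⟨[s], t, m ++ [u], by rw [htu]; rfl⟩)
      · have hus : u = s := by revert hst htu; cases s <;> cases t <;> cases u <;> simp
        exact .inr (.inr ⟨s, t :: u :: m, by rw [hus]; rfl⟩)

variable (hπ : IsPairing n π) (hρ : IsPairing n ρ)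
include hπ hρ

lemma step_mem {a : ℕ} (ha : a ∈ nodes n) (s : Bool) : step π ρ s a ∈ nodes n := by
  cases s
  exacts [hρ.maps a ha, hπ.maps a ha]

lemma step_step {a : ℕ} (ha : a ∈ nodes n) (s : Bool) : step π ρ s (step π ρ s a) = a := by
  cases s
  exacts [hρ.invol a ha, hπ.invol a ha]

lemma step_ne {a : ℕ} (ha : a ∈ nodes n) (s : Bool) : step π ρ s a ≠ a := by
  cases s
  exacts [hρ.nofix a ha, hπ.nofix a ha]

lemma applyWord_mem {a : ℕ} (ha : a ∈ nodes n) (w : List Bool) : applyWord π ρ w a ∈ nodes n := by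
  induction w with
  | nil => exact ha
  | cons s w ih => exact step_mem hπ hρ ih s

lemma applyWord_reverse_applyWord {a : ℕ} (ha : a ∈ nodes n) (w : List Bool) :
    applyWord π ρ w.reverse (applyWord π ρ w a) = a := by
  induction w with
  | nil => rfl
  | cons s w ih =>
    rw [List.reverse_cons, applyWord_append, applyWord_cons, applyWord_cons, applyWord_nil,
      step_step hπ hρ (applyWord_mem hπ hρ ha w), ih]

/-- The graph `π ∪ ρ` is bipartite. Cancelling a repeated letter or conjugating away equal end
letters shortens the word by two, and a single letter has no fixed point. -/
lemma even_length_of_applyWord_eq_self (w : List Bool) {a : ℕ} (ha : a ∈ nodes n)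
    (hw : applyWord π ρ w a = a) : Even w.length := by
  rcases Nat.even_or_odd w.length with he | ho
  · exact he
  rcases exists_adjacent_eq_or_ends_eq_of_odd_length w ho with
    ⟨s, rfl⟩ | ⟨u, s, v, rfl⟩ | ⟨s, m, rfl⟩
  · exact absurd hw (step_ne hπ hρ ha s)
  · have hcancel : applyWord π ρ (u ++ v) a = a := by
      rw [applyWord_append] at hw ⊢
      rwa [applyWord_cons, applyWord_cons, step_step hπ hρ (applyWord_mem hπ hρ ha v)] at hw
    have := even_length_of_applyWord_eq_self (u ++ v) ha hcancel
    simpa [parity_simps] using this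
  · have hb := step_mem hπ hρ ha s
    have hconj : applyWord π ρ m (step π ρ s a) = step π ρ s a := by
      rw [List.cons_append, applyWord_cons, applyWord_append, applyWord_cons, applyWord_nil] at hw
      have := congrArg (step π ρ s) hw
      rwa [step_step hπ hρ (applyWord_mem hπ hρ hb m)] at this
    have := even_length_of_applyWord_eq_self m hb hconj
    simpa [parity_simps] using this
termination_by w.length

lemma even_length_iff_of_applyWord_eq {a b : ℕ} (ha : a ∈ nodes n) {w₁ w₂ : List Bool}
    (h₁ : applyWord π ρ w₁ a = b) (h₂ : applyWord π ρ w₂ a = b) :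
    Even w₁.length ↔ Even w₂.length := by
  have hloop : applyWord π ρ (w₂.reverse ++ w₁) a = a := by
    rw [applyWord_append, h₁, ← h₂, applyWord_reverse_applyWord hπ hρ ha]
  have := even_length_of_applyWord_eq_self hπ hρ _ ha hloop
  rw [List.length_append, List.length_reverse, Nat.even_add] at this
  exact this.symm

end Words

section Components

variable {n : ℕ} {π ρ : ℕ → ℕ}

lemma exists_applyWord_of_compRel {a b : ℕ} (h : compRel n π ρ a b) :
    ∃ w, applyWord π ρ w a = b := by
  induction h with
  | refl => exact ⟨[], rfl⟩
  | tail _ hstep ih =>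
    obtain ⟨w, rfl⟩ := ih
    rcases hstep.2 with rfl | rfl
    exacts [⟨true :: w, rfl⟩, ⟨false :: w, rfl⟩]

lemma compRel_step {a : ℕ} (ha : a ∈ nodes n) (s : Bool) : compRel n π ρ a (step π ρ s a) := by
  refine Relation.ReflTransGen.single ⟨ha, ?_⟩
  cases s
  exacts [.inr rfl, .inl rfl]

variable (hπ : IsPairing n π) (hρ : IsPairing n ρ)
include hπ hρ

lemma compRel_symm {a b : ℕ} (h : compRel n π ρ a b) : compRel n π ρ b a := by
  induction h with
  | refl => exact .refl
  | tail _ hstep ih =>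
    obtain ⟨hu, rfl | rfl⟩ := hstep
    · exact .head ⟨hπ.maps _ hu, .inl (hπ.invol _ hu).symm⟩ ih
    · exact .head ⟨hρ.maps _ hu, .inr (hρ.invol _ hu).symm⟩ ih

omit hπ hρ

open scoped Classical

noncomputable def component (n : ℕ) (π ρ : ℕ → ℕ) (a : ℕ) : Finset ℕ :=
  (nodes n).filter (fun b => compRel n π ρ a b)

lemma numComponents_eq : numComponents n π ρ = ((nodes n).image (component n π ρ)).card := rfl

lemma mem_component {a b : ℕ} : b ∈ component n π ρ a ↔ b ∈ nodes n ∧ compRel n π ρ a b :=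
  Finset.mem_filter

lemma self_mem_component {a : ℕ} (ha : a ∈ nodes n) : a ∈ component n π ρ a :=
  mem_component.2 ⟨ha, .refl⟩

noncomputable def root (n : ℕ) (π ρ : ℕ → ℕ) (a : ℕ) : ℕ := sInf (component n π ρ a : Set ℕ)

lemma root_mem_component {a : ℕ} (ha : a ∈ nodes n) : root n π ρ a ∈ component n π ρ a :=
  Finset.Nonempty.csInf_mem ⟨a, self_mem_component ha⟩

lemma root_mem_nodes {a : ℕ} (ha : a ∈ nodes n) : root n π ρ a ∈ nodes n :=
  (mem_component.1 (root_mem_component ha)).1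

def EvenFrom (π ρ : ℕ → ℕ) (a b : ℕ) : Prop := ∃ w, applyWord π ρ w a = b ∧ Even w.length

include hπ hρ

lemma component_eq {a b : ℕ} (h : compRel n π ρ a b) :
    component n π ρ b = component n π ρ a := by
  ext x
  simp only [mem_component]
  exact and_congr_right fun _ => ⟨h.trans, (compRel_symm hπ hρ h).trans⟩

lemma compRel_root {a : ℕ} (ha : a ∈ nodes n) : compRel n π ρ (root n π ρ a) a :=
  compRel_symm hπ hρ (mem_component.1 (root_mem_component ha)).2

lemma component_root {a : ℕ} (ha : a ∈ nodes n) :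
    component n π ρ (root n π ρ a) = component n π ρ a :=
  component_eq hπ hρ (mem_component.1 (root_mem_component ha)).2

lemma root_root {a : ℕ} (ha : a ∈ nodes n) : root n π ρ (root n π ρ a) = root n π ρ a := by
  rw [root, component_root hπ hρ ha, root]

lemma root_step {a : ℕ} (ha : a ∈ nodes n) (s : Bool) :
    root n π ρ (step π ρ s a) = root n π ρ a := by
  rw [root, component_eq hπ hρ (compRel_step ha s), root]

lemma evenFrom_iff {a b : ℕ} (ha : a ∈ nodes n) {w : List Bool} (hw : applyWord π ρ w a = b) :
    EvenFrom π ρ a b ↔ Even w.length :=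
  ⟨fun ⟨_, hw', he⟩ => (even_length_iff_of_applyWord_eq hπ hρ ha hw' hw).1 he,
    fun he => ⟨w, hw, he⟩⟩

lemma evenFrom_step {a b : ℕ} (ha : a ∈ nodes n) (hab : compRel n π ρ a b) (s : Bool) :
    EvenFrom π ρ a (step π ρ s b) ↔ ¬ EvenFrom π ρ a b := by
  obtain ⟨w, hw⟩ := exists_applyWord_of_compRel hab
  rw [evenFrom_iff hπ hρ ha hw, evenFrom_iff hπ hρ ha (w := s :: w) (by rw [applyWord_cons, hw]),
    List.length_cons, Nat.even_add_one]

end Components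

section Alternating

variable {n : ℕ} {π ρ : ℕ → ℕ}

def Toggles (n : ℕ) (σ : ℕ → ℕ) (X : Finset ℕ) : Prop := ∀ i ∈ nodes n, σ i ∈ X ↔ i ∉ X

/-- `U` is a proper 2-colouring of the graph `π ∪ ρ`. -/
def IsAlternating (n : ℕ) (π ρ : ℕ → ℕ) (U : Finset ℕ) : Prop := Toggles n π U ∧ Toggles n ρ U

lemma isAlternating_iff_forall_step {U : Finset ℕ} :
    IsAlternating n π ρ U ↔ ∀ s, Toggles n (step π ρ s) U := by
  rw [Bool.forall_bool, IsAlternating, and_comm]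
  rfl

open scoped Classical

noncomputable def alternatingOf (n : ℕ) (π ρ : ℕ → ℕ) (A : Finset (Finset ℕ)) : Finset ℕ :=
  (nodes n).filter (fun i => EvenFrom π ρ (root n π ρ i) i ↔ component n π ρ i ∈ A)

noncomputable def componentsWithRootIn (n : ℕ) (π ρ : ℕ → ℕ) (U : Finset ℕ) :
    Finset (Finset ℕ) :=
  ((nodes n).image (component n π ρ)).filter (fun K => sInf (K : Set ℕ) ∈ U)

variable (hπ : IsPairing n π) (hρ : IsPairing n ρ)
include hπ hρ

lemma IsAlternating.applyWord_mem_iff {U : Finset ℕ} (hU : IsAlternating n π ρ U) {a : ℕ}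
    (ha : a ∈ nodes n) (w : List Bool) :
    applyWord π ρ w a ∈ U ↔ (a ∈ U ↔ Even w.length) := by
  induction w with
  | nil => simp
  | cons s w ih =>
    rw [applyWord_cons, isAlternating_iff_forall_step.1 hU s _ (applyWord_mem hπ hρ ha w), ih,
      List.length_cons, Nat.even_add_one]
    tauto

lemma IsAlternating.mem_iff_root_mem {U : Finset ℕ} (hU : IsAlternating n π ρ U) {a : ℕ}
    (ha : a ∈ nodes n) : a ∈ U ↔ (root n π ρ a ∈ U ↔ EvenFrom π ρ (root n π ρ a) a) := by
  obtain ⟨w, hw⟩ := exists_applyWord_of_compRel (compRel_root hπ hρ ha)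
  have := hU.applyWord_mem_iff hπ hρ (root_mem_nodes (π := π) (ρ := ρ) ha) w
  rw [hw] at this
  rw [this, evenFrom_iff hπ hρ (root_mem_nodes (π := π) (ρ := ρ) ha) hw]

lemma isAlternating_alternatingOf (A : Finset (Finset ℕ)) :
    IsAlternating n π ρ (alternatingOf n π ρ A) := by
  refine isAlternating_iff_forall_step.2 fun s i hi => ?_
  simp only [alternatingOf, Finset.mem_filter, step_mem hπ hρ hi, hi, true_and,
    root_step hπ hρ hi, component_eq hπ hρ (compRel_step hi s),
    evenFrom_step hπ hρ (root_mem_nodes hi) (compRel_root hπ hρ hi)]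
  tauto

lemma alternatingOf_componentsWithRootIn {U : Finset ℕ} (hU : IsAlternating n π ρ U)
    (hUsub : U ⊆ nodes n) : alternatingOf n π ρ (componentsWithRootIn n π ρ U) = U := by
  ext i
  have hroot : ∀ hi : i ∈ nodes n,
      component n π ρ i ∈ componentsWithRootIn n π ρ U ↔ root n π ρ i ∈ U := fun hi =>
    Finset.mem_filter.trans (and_iff_right (Finset.mem_image_of_mem _ hi))
  simp only [alternatingOf, Finset.mem_filter]
  by_cases hi : i ∈ nodes n
  · rw [hroot hi, hU.mem_iff_root_mem hπ hρ hi]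
    tauto
  · exact iff_of_false (fun h => hi h.1) (fun h => hi (hUsub h))

lemma componentsWithRootIn_alternatingOf {A : Finset (Finset ℕ)}
    (hA : A ⊆ (nodes n).image (component n π ρ)) :
    componentsWithRootIn n π ρ (alternatingOf n π ρ A) = A := by
  have hroot : ∀ a ∈ nodes n, root n π ρ a ∈ alternatingOf n π ρ A ↔ component n π ρ a ∈ A :=
    fun a ha => by
      have hself : EvenFrom π ρ (root n π ρ a) (root n π ρ a) := ⟨[], rfl, .zero⟩
      simp only [alternatingOf, Finset.mem_filter, root_mem_nodes ha, root_root hπ hρ ha,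
        component_root hπ hρ ha, hself, true_iff, true_and]
  ext K
  simp only [componentsWithRootIn, Finset.mem_filter]
  constructor
  · rintro ⟨hK, hKroot⟩
    obtain ⟨a, ha, rfl⟩ := Finset.mem_image.1 hK
    exact (hroot a ha).1 hKroot
  · intro hKA
    obtain ⟨a, ha, rfl⟩ := Finset.mem_image.1 (hA hKA)
    exact ⟨hA hKA, (hroot a ha).2 hKA⟩

theorem card_isAlternating :
    ((nodes n).powerset.filter (IsAlternating n π ρ)).card = 2 ^ numComponents n π ρ := by
  rw [numComponents_eq, ← Finset.card_powerset]
  refine Finset.card_bij' (fun U _ => componentsWithRootIn n π ρ U)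
    (fun A _ => alternatingOf n π ρ A) (fun U _ => Finset.mem_powerset.2 (Finset.filter_subset _ _))
    (fun A _ => Finset.mem_filter.2 ⟨Finset.mem_powerset.2 (Finset.filter_subset _ _),
      isAlternating_alternatingOf hπ hρ A⟩) (fun U hU => ?_) (fun A hA => ?_)
  · rw [Finset.mem_filter, Finset.mem_powerset] at hU
    exact alternatingOf_componentsWithRootIn hπ hρ hU.2 hU.1
  · exact componentsWithRootIn_alternatingOf hπ hρ (Finset.mem_powerset.1 hA)

end Alternating

section Solutions

variable {n : ℕ} {c : ℕ → Bool}

def odds (n : ℕ) : Finset ℕ := (nodes n).filter (· % 2 = 1)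

lemma symmDiff_subset_nodes {S X : Finset ℕ} (hS : S ⊆ nodes n) (hX : X ⊆ nodes n) :
    symmDiff S X ⊆ nodes n :=
  Finset.symmDiff_subset_union.trans (Finset.union_subset hS hX)

lemma invariant_iff_toggles_symmDiff {σ : ℕ → ℕ} (hσ : IsPairing n σ) {S X : Finset ℕ}
    (hS : S ⊆ nodes n) (hX : Toggles n σ X) :
    Invariant S σ ↔ Toggles n σ (symmDiff S X) := by
  have hmem : ∀ {i}, i ∈ symmDiff S X ↔ (i ∈ S ↔ i ∉ X) := by
    intro i; rw [Finset.mem_symmDiff]; tauto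
  constructor
  · intro h i hi
    have hσS : σ i ∈ S ↔ i ∈ S := ⟨fun h' => hσ.invol i hi ▸ h _ h', h i⟩
    rw [hmem, hmem, hσS, hX i hi]
    tauto
  · intro h i hiS
    have := h i (hS hiS)
    rw [hmem, hmem, hX i (hS hiS)] at this
    tauto

lemma toggles_blacks {ρ : ℕ → ℕ} (hρ : IsPairing n ρ) (hρbw : IsBW n c ρ) :
    Toggles n ρ (blacks n c) := fun i hi => by
  simp [blacks, hi, hρ.maps i hi, hρbw i hi]

lemma toggles_odds {π : ℕ → ℕ} (hπ : IsPairing n π) (hπoe : IsOE n π) :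
    Toggles n π (odds n) := fun i hi => by
  have := hπoe i hi
  simp only [odds, Finset.mem_filter, hi, hπ.maps i hi, true_and]
  omega

lemma symmDiff_Tset_odds : symmDiff (Tset n c) (odds n) = blacks n c := by
  ext i
  simp only [Finset.mem_symmDiff, Tset, odds, blacks, Finset.mem_filter]
  by_cases hi : i ∈ nodes n <;> cases c i <;> simp [hi]
  omega

variable {π ρ : ℕ → ℕ} (hπ : IsPairing n π) (hπoe : IsOE n π) (hρ : IsPairing n ρ)
  (hρbw : IsBW n c ρ)
include hπ hπoe hρ hρbw

lemma invariant_and_invariant_iff_isAlternating {S : Finset ℕ} (hS : S ⊆ nodes n) :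
    Invariant S ρ ∧ Invariant (symmDiff S (Tset n c)) π ↔
      IsAlternating n π ρ (symmDiff S (blacks n c)) := by
  have hST : symmDiff S (Tset n c) ⊆ nodes n := symmDiff_subset_nodes hS (Finset.filter_subset _ _)
  rw [invariant_iff_toggles_symmDiff hρ hS (toggles_blacks hρ hρbw),
    invariant_iff_toggles_symmDiff hπ hST (toggles_odds hπ hπoe), symmDiff_assoc,
    symmDiff_Tset_odds, IsAlternating, and_comm]

open scoped Classical in
lemma card_solutions_eq_card_isAlternating :
    (((nodes n).powerset).filter (fun S =>
        (∀ i ∈ S, ρ i ∈ S) ∧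
        (∀ i ∈ symmDiff S (Tset n c), π i ∈ symmDiff S (Tset n c)))).card
      = ((nodes n).powerset.filter (IsAlternating n π ρ)).card := by
  have hB : blacks n c ⊆ nodes n := Finset.filter_subset _ _
  refine Finset.card_nbij' (fun S => symmDiff S (blacks n c)) (fun U => symmDiff U (blacks n c))
    (fun S hS => ?_) (fun U hU => ?_) (fun S _ => symmDiff_symmDiff_cancel_right _ _)
    (fun U _ => symmDiff_symmDiff_cancel_right _ _)
  · simp only [Finset.coe_filter, Finset.mem_powerset, Set.mem_ofPred_eq] at hS ⊢
    exact ⟨symmDiff_subset_nodes hS.1 hB,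
      (invariant_and_invariant_iff_isAlternating hπ hπoe hρ hρbw hS.1).1 hS.2⟩
  · simp only [Finset.coe_filter, Finset.mem_powerset, Set.mem_ofPred_eq] at hU ⊢
    have hUB := symmDiff_subset_nodes hU.1 hB
    refine ⟨hUB, (invariant_and_invariant_iff_isAlternating hπ hπoe hρ hρbw hUB).2 ?_⟩
    rw [symmDiff_symmDiff_cancel_right]
    exact hU.2

end Solutions

lemma balancedSubset_of_invariant {n : ℕ} {c : ℕ → Bool} {ρ : ℕ → ℕ} (hρ : IsPairing n ρ)
    (hρbw : IsBW n c ρ) {S : Finset ℕ} (hS : S ⊆ nodes n) (hinv : Invariant S ρ) :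
    BalancedSubset c S := by
  refine Finset.card_nbij' ρ ρ (fun i hi => ?_) (fun i hi => ?_)
    (fun i hi => hρ.invol i (hS (Finset.mem_filter.1 hi).1))
    (fun i hi => hρ.invol i (hS (Finset.mem_filter.1 hi).1))
  all_goals
    obtain ⟨hiS, hci⟩ := Finset.mem_filter.1 hi
    exact Finset.mem_filter.2 ⟨hinv i hiS, by rw [hρbw i (hS hiS), hci]; rfl⟩

open scoped Classical in
theorem statement12_general (n : ℕ) (c : ℕ → Bool)
    (π ρ : ℕ → ℕ) (hπ : IsPairing n π) (hπoe : IsOE n π)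
    (hρ : IsPairing n ρ) (hρbw : IsBW n c ρ) :
    (((nodes n).powerset).filter (fun S =>
        (∀ i ∈ S, ρ i ∈ S) ∧
        (∀ i ∈ symmDiff S (Tset n c), π i ∈ symmDiff S (Tset n c)))).card
      = 2 ^ (numComponents n π ρ) ∧
    (∀ S : Finset ℕ, S ⊆ nodes n → (∀ i ∈ S, ρ i ∈ S) →
      (∀ i ∈ symmDiff S (Tset n c), π i ∈ symmDiff S (Tset n c)) →
      BalancedSubset c S) :=
  ⟨(card_solutions_eq_card_isAlternating hπ hπoe hρ hρbw).trans (card_isAlternating hπ hρ),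
    fun _ hS hinv _ => balancedSubset_of_invariant hρ hρbw hS hinv⟩

open scoped Classical in
/-- Lemma 2.3.4: the number of subsets `S ⊆ N` with `ρ(S) = S` and
`π(S ∆ T) = S ∆ T` is `2^{#components of π ∪ ρ}`, and every such `S` is balanced. -/
theorem statement12 (n : ℕ) (c : ℕ → Bool) (hbal : BalancedColoring n c)
    (π ρ : ℕ → ℕ) (hπ : IsPairing n π) (hπoe : IsOE n π)
    (hρ : IsPairing n ρ) (hρbw : IsBW n c ρ) :
    (((nodes n).powerset).filter (fun S =>
        (∀ i ∈ S, ρ i ∈ S) ∧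
        (∀ i ∈ symmDiff S (Tset n c), π i ∈ symmDiff S (Tset n c)))).card
      = 2 ^ (numComponents n π ρ) ∧
    (∀ S : Finset ℕ, S ⊆ nodes n → (∀ i ∈ S, ρ i ∈ S) →
      (∀ i ∈ symmDiff S (Tset n c), π i ∈ symmDiff S (Tset n c)) →
      BalancedSubset c S) :=
  statement12_general n c π ρ hπ hπoe hρ hρbw

end DD
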